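/- arXiv:1208.2919 — 2 statements merged into one kernel-verified Lean document; each statement's English description precedes it below -/
import Mathlib

section
/- If a differentiable function c : ℝ_{>0} → ℝ satisfies c(λμ) = λ·c(μ) + c(λ) for all λ, μ > 0, then there exists q ∈ ℝ such that c(λ) = q·(1 − λ) for all λ > 0. -/
theorem entropy_scaling_constant
    (c : ℝ → ℝ)
    (hdiff : DifferentiableOn ℝ c (Set.Ioi 0))
    (hfe : ∀ l m : ℝ, 0 < l → 0 < m → c (l * m) = l * c m + c l) :
    ∃ q : ℝ, ∀ l : ℝ, 0 < l → c l = q * (1 - l) := by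
  refine ⟨-c 2, fun l hl => ?_⟩
  have h1 := hfe l 2 hl two_pos
  have h2 := hfe 2 l two_pos hl
  rw [mul_comm] at h2
  linarith
end

section
/- Let S : ℝ → ℝ be smooth with S''(x) = u(x) ≠ 0 near 0, let x̄(y) solve y = S'(x) near y₀ = S'(0), and define the Legendre transform S̃(y) = S(x̄(y)) − y·x̄(y). Then the second derivative w(y) = S̃''(y) satisfies, for all n ≥ 0, (d/dy)^n w(y)|_{y=y₀} = −((1/u(x)) d/dx)^n (1/u(x))|_{x=0}. -/
open Real Filter
open scoped ContDiff

/-- The operator `f ↦ (1/u)·f'`. -/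
noncomputable def legOp (u : ℝ → ℝ) (f : ℝ → ℝ) : ℝ → ℝ :=
  fun x => (u x)⁻¹ * deriv f x

private lemma evIter {f g : ℝ → ℝ} {y : ℝ} (h : f =ᶠ[nhds y] g) :
    ∀ n : ℕ, iteratedDeriv n f =ᶠ[nhds y] iteratedDeriv n g := by
  intro n
  induction n with
  | zero => simpa [iteratedDeriv_zero] using h
  | succ n ih => simpa [iteratedDeriv_succ] using ih.deriv

theorem legendre_transform_derivative_link
    (S : ℝ → ℝ) (hS : ContDiff ℝ (⊤ : ℕ∞) S)
    (u : ℝ → ℝ) (hu : ∀ x : ℝ, u x = deriv (deriv S) x)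
    (hu0 : ∀ᶠ x in nhds (0:ℝ), u x ≠ 0)
    (y₀ : ℝ) (hy₀ : deriv S 0 = y₀)
    (xbar : ℝ → ℝ) (hxbar : ContDiff ℝ (⊤ : ℕ∞) xbar)
    (hxbar0 : xbar y₀ = 0)
    (hinv : ∀ᶠ y in nhds y₀, deriv S (xbar y) = y)
    (Stilde : ℝ → ℝ) (hSt : ∀ y : ℝ, Stilde y = S (xbar y) - y * xbar y)
    (w : ℝ → ℝ) (hw : ∀ y : ℝ, w y = deriv (deriv Stilde) y) :
    ∀ n : ℕ, iteratedDeriv n w y₀ = -((legOp u)^[n] (fun x => (u x)⁻¹)) 0 := by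
  have hu' : u = deriv (deriv S) := funext hu
  have h1le : (1 : WithTop ℕ∞) ≤ ∞ := by exact_mod_cast le_top
  have hse : (∞ : WithTop ℕ∞) + 1 ≤ ∞ := le_of_eq (show ∞ + 1 = ∞ from rfl)
  have hS' : ContDiff ℝ ∞ S := hS.of_le (by simp)
  have hS1 : ContDiff ℝ ∞ (deriv S) := (contDiff_infty_iff_deriv.mp hS').2
  have hS2 : ContDiff ℝ ∞ u := hu' ▸ (contDiff_infty_iff_deriv.mp hS1).2
  set v : ℝ → ℝ := fun x => (u x)⁻¹ with hv
  -- xbar derivative facts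
  have hxd : ∀ y : ℝ, HasDerivAt xbar (deriv xbar y) y :=
    fun y => (hxbar.differentiable (by simp) y).hasDerivAt
  have hten : Tendsto xbar (nhds y₀) (nhds 0) := by
    simpa [hxbar0] using hxbar.continuous.tendsto y₀
  have ev1 : ∀ᶠ y in nhds y₀, u (xbar y) ≠ 0 := hten.eventually hu0
  have hcomp : ∀ y : ℝ, HasDerivAt (fun z => deriv S (xbar z)) (u (xbar y) * deriv xbar y) y := by
    intro y
    have h1 : HasDerivAt (deriv S) (u (xbar y)) (xbar y) := by
      have := (hS1.differentiable (by simp) (xbar y)).hasDerivAt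
      rwa [← hu (xbar y)] at this
    exact h1.comp y (hxd y)
  have hder1 : deriv (fun z => deriv S (xbar z)) =ᶠ[nhds y₀] deriv (fun z : ℝ => z) :=
    Filter.EventuallyEq.deriv hinv
  have ev2 : ∀ᶠ y in nhds y₀, u (xbar y) * deriv xbar y = 1 := by
    filter_upwards [hder1] with y hy
    rw [← (hcomp y).deriv, hy]
    simp
  have ev3 : ∀ᶠ y in nhds y₀, deriv xbar y = (u (xbar y))⁻¹ := by
    filter_upwards [ev2] with y h2
    exact eq_inv_of_mul_eq_one_left (by rw [mul_comm]; exact h2)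
  -- derivative of Stilde
  have hSd : deriv Stilde =ᶠ[nhds y₀] fun y => -xbar y := by
    filter_upwards [hinv] with y hy
    have h1 : HasDerivAt (fun z => S (xbar z)) (deriv S (xbar y) * deriv xbar y) y :=
      ((hS.differentiable (by simp) (xbar y)).hasDerivAt).comp y (hxd y)
    have h2 : HasDerivAt (fun z : ℝ => z * xbar z) (1 * xbar y + y * deriv xbar y) y :=
      (hasDerivAt_id y).mul (hxd y)
    have h3 : HasDerivAt Stilde
        (deriv S (xbar y) * deriv xbar y - (1 * xbar y + y * deriv xbar y)) y := by
      have h4 := h1.sub h2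
      have h5 : Stilde = fun z => S (xbar z) - z * xbar z := funext hSt
      rw [h5]
      exact h4
    rw [h3.deriv, hy]
    ring
  have hwev : w =ᶠ[nhds y₀] fun y => -(v (xbar y)) := by
    filter_upwards [hSd.deriv, ev3] with y h1 h2
    rw [hw y, h1]
    have : deriv (fun z => -xbar z) y = -deriv xbar y := deriv.neg
    rw [this, h2]
  -- smoothness of iterated legOp on V
  set V : Set ℝ := {x : ℝ | u x ≠ 0} with hV
  have openV : IsOpen V := by
    have : V = u ⁻¹' ({0}ᶜ) := by ext x; simp [hV]
    rw [this]
    exact isOpen_compl_singleton.preimage hS2.continuous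
  have vsm : ContDiffOn ℝ ∞ v V := hS2.contDiffOn.inv (fun x hx => hx)
  have gsm : ∀ n : ℕ, ContDiffOn ℝ ∞ ((legOp u)^[n] v) V := by
    intro n
    induction n with
    | zero => exact vsm
    | succ n ih =>
      rw [Function.iterate_succ_apply']
      have hd : ContDiffOn ℝ ∞ (deriv ((legOp u)^[n] v)) V :=
        ih.deriv_of_isOpen openV hse
      exact vsm.mul hd
  -- key chain-rule induction
  have key : ∀ n : ℕ,
      iteratedDeriv n (fun y => v (xbar y)) =ᶠ[nhds y₀]
        fun y => ((legOp u)^[n] v) (xbar y) := by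
    intro n
    induction n with
    | zero => simp [iteratedDeriv_zero]
    | succ n ih =>
      rw [iteratedDeriv_succ]
      refine ih.deriv.trans ?_
      filter_upwards [ev1, ev3] with y h1 h2
      have hmem : V ∈ nhds (xbar y) := openV.mem_nhds h1
      have hg : HasDerivAt ((legOp u)^[n] v) (deriv ((legOp u)^[n] v) (xbar y)) (xbar y) :=
        (((gsm n).contDiffAt hmem).differentiableAt (by simp)).hasDerivAt
      have hc := (hg.comp y (hxd y)).deriv
      rw [Function.iterate_succ_apply']
      rw [Function.comp_def] at hc
      rw [hc, h2]
      simp only [legOp]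
      ring
  intro n
  have e1 : iteratedDeriv n w y₀ = iteratedDeriv n (fun y => -(v (xbar y))) y₀ :=
    (evIter hwev n).eq_of_nhds
  rw [e1, iteratedDeriv_fun_neg, (key n).eq_of_nhds, hxbar0]
end
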